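/- arXiv:math/0507069 — 7 statements merged into one kernel-verified Lean document; each statement's English description precedes it below -/
import Mathlib

section
/- Let A be a positive semidefinite real symmetric d×d matrix, B a d×e real matrix, and C an e×e real symmetric matrix. The block matrix M = [[A, B],[Bᵀ, C]] is positive semidefinite if and only if there exists a d×e matrix W with B = AW and C ⪰ WᵀAW. -/
open Matrix

/-!
Conjugating by the unipotent matrix `[[1, W], [0, 1]]` turns `[[A, AW], [(AW)ᴴ, C]]` into
`diag(A, C - Wᴴ A W)`, so once `B = AW` both directions reduce to positivity of the diagonal
blocks. Positivity of the block matrix does force `B` into this form: if `A x = 0`, the quadratic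
form vanishes at `(x, 0)`, so the block matrix kills `(x, 0)`, and the lower half of that image is
`Bᴴ x`. Hence `ker A ⊆ ker Bᴴ`, so `Bᴴ = V A` for some `V`, i.e. `B = A Vᴴ`.
-/

theorem LinearMap.exists_comp_eq_of_ker_le {K V U X : Type*} [DivisionRing K]
    [AddCommGroup V] [Module K V] [AddCommGroup U] [Module K U] [AddCommGroup X] [Module K X]
    {f : V →ₗ[K] U} {g : V →ₗ[K] X} (h : ker f ≤ ker g) : ∃ k : U →ₗ[K] X, k ∘ₗ f = g := by
  obtain ⟨k, hk⟩ := IsSemisimpleModule.extension_property ((ker f).liftQ f le_rfl)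
    (ker_eq_bot.1 <| Submodule.ker_liftQ_eq_bot _ _ _ le_rfl) ((ker f).liftQ g h)
  exact ⟨k, ext fun v ↦ congr($hk (Submodule.Quotient.mk v))⟩

namespace Matrix

variable {m n : Type*} [Fintype m] [Fintype n]

theorem exists_eq_mul_of_ker_le {K l : Type*} [Field K] {A : Matrix m n K} {B : Matrix l n K}
    (h : ∀ x, A *ᵥ x = 0 → B *ᵥ x = 0) : ∃ V : Matrix l m K, B = V * A := by
  classical
  obtain ⟨k, hk⟩ := LinearMap.exists_comp_eq_of_ker_le (f := A.mulVecLin) (g := B.mulVecLin) h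
  refine ⟨LinearMap.toMatrix' k, toLin'.injective ?_⟩
  rw [toLin'_mul, toLin'_toMatrix']
  exact hk.symm

theorem fromBlocks_mul_eq_conjTranspose_mul_mul {R : Type*} [Ring R] [StarRing R]
    [DecidableEq m] [DecidableEq n] {A : Matrix m m R} (hA : A.IsHermitian) (W : Matrix m n R)
    (C : Matrix n n R) :
    fromBlocks A (A * W) (A * W)ᴴ C
      = (fromBlocks 1 W 0 1)ᴴ * fromBlocks A 0 0 (C - Wᴴ * A * W) * fromBlocks 1 W 0 1 := by
  simp [fromBlocks_conjTranspose, fromBlocks_multiply, conjTranspose_mul, hA.eq, Matrix.mul_assoc]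

section OrderedRing

variable {R : Type*} [CommRing R] [PartialOrder R] [StarRing R] [IsOrderedAddMonoid R]

theorem posSemidef_fromBlocks_zero_iff {A : Matrix m m R} {D : Matrix n n R} :
    (fromBlocks A 0 0 D).PosSemidef ↔ A.PosSemidef ∧ D.PosSemidef := by
  refine ⟨fun h ↦ ⟨h.submatrix Sum.inl, h.submatrix Sum.inr⟩, fun ⟨hA, hD⟩ ↦ ?_⟩
  refine .of_dotProduct_mulVec_nonneg (hA.1.fromBlocks (by simp) hD.1) fun x ↦ ?_
  rw [← Sum.elim_comp_inl_inr x, fromBlocks_mulVec, Function.star_sumElim,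
    sumElim_dotProduct_sumElim]
  simp only [zero_mulVec, add_zero, zero_add, Sum.elim_comp_inl, Sum.elim_comp_inr]
  exact add_nonneg (hA.dotProduct_mulVec_nonneg _) (hD.dotProduct_mulVec_nonneg _)

theorem posSemidef_fromBlocks_mul_iff {A : Matrix m m R} (hA : A.IsHermitian)
    (W : Matrix m n R) (C : Matrix n n R) :
    (fromBlocks A (A * W) (A * W)ᴴ C).PosSemidef ↔
      A.PosSemidef ∧ (C - Wᴴ * A * W).PosSemidef := by
  classical
  rw [fromBlocks_mul_eq_conjTranspose_mul_mul hA, ← star_eq_conjTranspose,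
    IsUnit.posSemidef_star_left_conjugate_iff (isUnit_fromBlocks_zero₂₁.2 ⟨isUnit_one, isUnit_one⟩),
    posSemidef_fromBlocks_zero_iff]

end OrderedRing

section RCLike

open scoped ComplexOrder

variable {𝕜 : Type*} [RCLike 𝕜]

theorem PosSemidef.conjTranspose_mulVec_eq_zero_of_fromBlocks
    {A : Matrix m m 𝕜} {B : Matrix m n 𝕜} {C : Matrix n n 𝕜}
    (hM : (fromBlocks A B Bᴴ C).PosSemidef) {x : m → 𝕜} (hx : A *ᵥ x = 0) : Bᴴ *ᵥ x = 0 := by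
  have hMx : fromBlocks A B Bᴴ C *ᵥ Sum.elim x (0 : n → 𝕜) = Sum.elim (0 : m → 𝕜) (Bᴴ *ᵥ x) := by
    simp [fromBlocks_mulVec, hx]
  have hker := (hM.dotProduct_mulVec_zero_iff (Sum.elim x 0)).1
    (by simp [hMx, Function.star_sumElim])
  funext j
  simpa using congr_fun (hMx.symm.trans hker) (Sum.inr j)

theorem PosSemidef.fromBlocks_iff_exists {A : Matrix m m 𝕜} (hA : A.PosSemidef)
    (B : Matrix m n 𝕜) (C : Matrix n n 𝕜) :
    (fromBlocks A B Bᴴ C).PosSemidef ↔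
      ∃ W : Matrix m n 𝕜, B = A * W ∧ (C - Wᴴ * A * W).PosSemidef := by
  constructor
  · intro hM
    obtain ⟨V, hV⟩ := exists_eq_mul_of_ker_le fun _ ↦ hM.conjTranspose_mulVec_eq_zero_of_fromBlocks
    obtain rfl : B = A * Vᴴ := by
      rw [← conjTranspose_conjTranspose B, hV, conjTranspose_mul, hA.1.eq]
    exact ⟨Vᴴ, rfl, ((posSemidef_fromBlocks_mul_iff hA.1 _ _).1 hM).2⟩
  · rintro ⟨W, rfl, hE⟩
    exact (posSemidef_fromBlocks_mul_iff hA.1 W C).2 ⟨hA, hE⟩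

end RCLike

end Matrix

theorem smuljan_block_psd_general (d e : ℕ) (A : Matrix (Fin d) (Fin d) ℝ)
    (B : Matrix (Fin d) (Fin e) ℝ) (C : Matrix (Fin e) (Fin e) ℝ)
    (hA : A.PosSemidef) :
    (Matrix.fromBlocks A B Bᵀ C).PosSemidef ↔
      ∃ W : Matrix (Fin d) (Fin e) ℝ, B = A * W ∧ (C - Wᵀ * A * W).PosSemidef := by
  simpa only [conjTranspose_eq_transpose_of_trivial] using hA.fromBlocks_iff_exists B C

/-- Smul'jan's block matrix theorem: for A positive semidefinite and C symmetric,
the block matrix [[A, B],[Bᵀ, C]] is positive semidefinite iff B = AW for some W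
and C − WᵀAW is positive semidefinite. -/
theorem smuljan_block_psd (d e : ℕ) (A : Matrix (Fin d) (Fin d) ℝ)
    (B : Matrix (Fin d) (Fin e) ℝ) (C : Matrix (Fin e) (Fin e) ℝ)
    (hA : A.PosSemidef) (hC : C.IsSymm) :
    (Matrix.fromBlocks A B Bᵀ C).PosSemidef ↔
      ∃ W : Matrix (Fin d) (Fin e) ℝ, B = A * W ∧ (C - Wᵀ * A * W).PosSemidef :=
  smuljan_block_psd_general d e A B C hA
end

section
/- Let M = [[A, B],[Bᵀ, C]] be a positive semidefinite real block matrix with A a d×d block, and suppose B = AW for some W. Then rank M = rank A if and only if C = WᵀAW. -/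
open Matrix

/-!
Since `A` is symmetric, `Bᵀ = WᵀA`, and block elimination with the unitriangular matrices
`[[1, 0], [Wᵀ, 1]]` and `[[1, W], [0, 1]]` turns `M` into `diag(A, C - WᵀAW)`. Hence
`rank M = rank A + rank (C - WᵀAW)`, and the second summand vanishes iff `C = WᵀAW`.
-/

theorem Submodule.finrank_prod {K M N : Type*} [DivisionRing K] [AddCommGroup M] [Module K M]
    [AddCommGroup N] [Module K N] (p : Submodule K M) (q : Submodule K N)
    [FiniteDimensional K p] [FiniteDimensional K q] :
    Module.finrank K (p.prod q) = Module.finrank K p + Module.finrank K q := by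
  have hrange : p.prod q = LinearMap.range (p.subtype.prodMap q.subtype) := by
    rw [LinearMap.range_prodMap, p.range_subtype, q.range_subtype]
  rw [hrange, LinearMap.finrank_range_of_inj (p.injective_subtype.prodMap q.injective_subtype),
    Module.finrank_prod]

namespace Matrix

variable {l m n o : Type*}

theorem fromBlocks_eq_mul_fromBlocks_zero_zero_mul {α : Type*} [Ring α]
    [Fintype l] [Fintype m] [Fintype n] [Fintype o]
    [DecidableEq l] [DecidableEq m] [DecidableEq n] [DecidableEq o]
    (A : Matrix l m α) (W : Matrix m n α) (V : Matrix o l α) (C : Matrix o n α) :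
    fromBlocks A (A * W) (V * A) C =
      (fromBlocks 1 0 V 1 : Matrix (l ⊕ o) (l ⊕ o) α) * fromBlocks A 0 0 (C - V * A * W) *
        (fromBlocks 1 W 0 1 : Matrix (m ⊕ n) (m ⊕ n) α) := by
  simp [fromBlocks_multiply, Matrix.mul_assoc]

variable {K : Type*} [Field K]

theorem rank_eq_zero_iff [Fintype n] (A : Matrix m n K) : A.rank = 0 ↔ A = 0 := by
  rw [rank, Submodule.finrank_eq_zero, LinearMap.range_eq_bot, LinearMap.ext_iff, ext_iff_mulVec]
  simp only [mulVecLin_apply, LinearMap.zero_apply, zero_mulVec]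

theorem mulVecLin_fromBlocks_zero_zero [Fintype m] [Fintype n]
    (A : Matrix l m K) (D : Matrix o n K) :
    (fromBlocks A 0 0 D).mulVecLin =
      (LinearEquiv.sumArrowLequivProdArrow l o K K).symm.toLinearMap ∘ₗ
        A.mulVecLin.prodMap D.mulVecLin ∘ₗ
          (LinearEquiv.sumArrowLequivProdArrow m n K K).toLinearMap := by
  ext v (i | i) <;> simp [fromBlocks_mulVec] <;> rfl

theorem rank_fromBlocks_zero_zero [Fintype m] [Fintype n]
    (A : Matrix l m K) (D : Matrix o n K) :
    (fromBlocks A 0 0 D).rank = A.rank + D.rank := by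
  rw [rank, mulVecLin_fromBlocks_zero_zero, LinearMap.range_comp, LinearMap.range_comp,
    LinearEquiv.range, Submodule.map_top, LinearMap.range_prodMap, LinearEquiv.finrank_map_eq,
    Submodule.finrank_prod, rank, rank]

theorem rank_fromBlocks_mul_mul [Fintype l] [Fintype m] [Fintype n] [Fintype o]
    [DecidableEq l] [DecidableEq m] [DecidableEq n] [DecidableEq o]
    (A : Matrix l m K) (W : Matrix m n K) (V : Matrix o l K) (C : Matrix o n K) :
    (fromBlocks A (A * W) (V * A) C).rank = A.rank + (C - V * A * W).rank := by
  rw [fromBlocks_eq_mul_fromBlocks_zero_zero_mul,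
    rank_mul_eq_left_of_isUnit_det _ _ (by simp),
    rank_mul_eq_right_of_isUnit_det _ _ (by simp),
    rank_fromBlocks_zero_zero]

end Matrix

/-- For a positive semidefinite block matrix M = [[A, B],[Bᵀ, C]] with B = AW,
rank M = rank A iff C = WᵀAW. -/
theorem flat_iff_C_eq (d e : ℕ) (A : Matrix (Fin d) (Fin d) ℝ)
    (B : Matrix (Fin d) (Fin e) ℝ) (C : Matrix (Fin e) (Fin e) ℝ)
    (W : Matrix (Fin d) (Fin e) ℝ)
    (hM : (Matrix.fromBlocks A B Bᵀ C).PosSemidef) (hB : B = A * W) :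
    (Matrix.fromBlocks A B Bᵀ C).rank = A.rank ↔ C = Wᵀ * A * W := by
  have hA : Aᵀ = A := (isHermitian_fromBlocks_iff.mp hM.isHermitian).1
  have hBt : Bᵀ = Wᵀ * A := by rw [hB, transpose_mul, hA]
  rw [hBt, hB, rank_fromBlocks_mul_mul, Nat.add_eq_left, Matrix.rank_eq_zero_iff, sub_eq_zero]
end

section
/- Let μ be a positive Borel measure on ℝ² with finite moments of degree up to 2n, and let M(n) be its moment matrix. For a polynomial p of degree ≤ n, M(n) p̂ = 0 if and only if μ is supported in the zero set Z(p) = {(x,y) : p(x,y) = 0}. -/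
open MeasureTheory Matrix

/-- Index set for the moment matrix `M(n)`: monomials `yⁱxʲ` with `i + j ≤ n`,
encoded as pairs `(i, j)`. -/
abbrev MIdx (n : ℕ) := {v : Fin (n + 1) × Fin (n + 1) // (v.1 : ℕ) + (v.2 : ℕ) ≤ n}

/-- The moment matrix `M(n)(β)`: entry in row `yⁱxʲ`, column `yᵏxˡ` is `β_{i+k, j+l}`. -/
def momentMat (n : ℕ) (β : ℕ → ℕ → ℝ) : Matrix (MIdx n) (MIdx n) ℝ :=
  Matrix.of fun u v => β ((u.1.1 : ℕ) + (v.1.1 : ℕ)) ((u.1.2 : ℕ) + (v.1.2 : ℕ))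

/-- The coefficient vector `p̂` of a two-variable polynomial (convention: `X 0 = x`,
`X 1 = y`; the coordinate of `p̂` at `(i, j)` is the coefficient of `yⁱxʲ`). -/
noncomputable def coeffVec (n : ℕ) (p : MvPolynomial (Fin 2) ℝ) : MIdx n → ℝ :=
  fun v => MvPolynomial.coeff
    (Finsupp.single (0 : Fin 2) ((v.1.2 : ℕ)) + Finsupp.single (1 : Fin 2) ((v.1.1 : ℕ))) p

/-- `M(n)` is recursively generated: if `p, q, pq` have degree at most `n` and
`p(X,Y) = 0` in the column space, then `(pq)(X,Y) = 0`. -/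
def RecursivelyGenerated (n : ℕ) (M : Matrix (MIdx n) (MIdx n) ℝ) : Prop :=
  ∀ p q : MvPolynomial (Fin 2) ℝ, p.totalDegree ≤ n → q.totalDegree ≤ n →
    (p * q).totalDegree ≤ n → M.mulVec (coeffVec n p) = 0 →
      M.mulVec (coeffVec n (p * q)) = 0

/-- The variety `V(M(n))`: common zero set of all polynomials of degree ≤ n whose
coefficient vector is annihilated by `M(n)`. -/
def varietyOf (n : ℕ) (M : Matrix (MIdx n) (MIdx n) ℝ) : Set (ℝ × ℝ) :=
  {w | ∀ p : MvPolynomial (Fin 2) ℝ, p.totalDegree ≤ n →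
    M.mulVec (coeffVec n p) = 0 → MvPolynomial.eval ![w.1, w.2] p = 0}

/-- The Riesz functional `L_β` of a truncated moment sequence. -/
def riesz (β : ℕ → ℕ → ℝ) (p : MvPolynomial (Fin 2) ℝ) : ℝ :=
  ∑ v ∈ p.support, p.coeff v * β (v 1) (v 0)

/-- The (closed) support of a Borel measure on `ℝ²`: points all of whose open
neighborhoods have positive measure. -/
def msupport (μ : Measure (ℝ × ℝ)) : Set (ℝ × ℝ) :=
  {w | ∀ U : Set (ℝ × ℝ), IsOpen U → w ∈ U → μ U ≠ 0}

/-- `μ` is a representing measure for `β^{(2n)}`. -/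
def IsRepMeasure (n : ℕ) (β : ℕ → ℕ → ℝ) (μ : Measure (ℝ × ℝ)) : Prop :=
  ∀ i j : ℕ, i + j ≤ 2 * n →
    Integrable (fun w : ℝ × ℝ => w.2 ^ i * w.1 ^ j) μ ∧
      β i j = ∫ w : ℝ × ℝ, w.2 ^ i * w.1 ^ j ∂μ


lemma evalSum (n : ℕ) (p : MvPolynomial (Fin 2) ℝ) (hp : p.totalDegree ≤ n)
    (x y : ℝ) :
    MvPolynomial.eval ![x, y] p =
      ∑ v : MIdx n, coeffVec n p v * (y ^ (v.1.1 : ℕ) * x ^ (v.1.2 : ℕ)) := by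
  classical
  set e : MIdx n → (Fin 2 →₀ ℕ) := fun v =>
    Finsupp.single (0 : Fin 2) ((v.1.2 : ℕ)) + Finsupp.single (1 : Fin 2) ((v.1.1 : ℕ)) with he
  have he0 : ∀ v : MIdx n, e v 0 = (v.1.2 : ℕ) := by
    intro v; simp [he, Finsupp.single_apply]
  have he1 : ∀ v : MIdx n, e v 1 = (v.1.1 : ℕ) := by
    intro v; simp [he, Finsupp.single_apply]
  have heinj : Function.Injective e := by
    intro v w h
    have h0 : (v.1.2 : ℕ) = (w.1.2 : ℕ) := by rw [← he0 v, ← he0 w, h]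
    have h1 : (v.1.1 : ℕ) = (w.1.1 : ℕ) := by rw [← he1 v, ← he1 w, h]
    ext
    · exact h1
    · exact h0
  have hdeg : ∀ d ∈ p.support, d 1 + d 0 ≤ n := by
    intro d hd
    have h1 : (d.sum fun _ e => e) ≤ p.totalDegree := MvPolynomial.le_totalDegree hd
    have h2 : (d.sum fun _ e => e) = d 0 + d 1 := by
      rw [Finsupp.sum_fintype]
      · exact Fin.sum_univ_two d
      · intro i; rfl
    omega
  have hsub : p.support ⊆ Finset.univ.image e := by
    intro d hd
    have hdn := hdeg d hd
    refine Finset.mem_image.mpr ⟨⟨(⟨d 1, by omega⟩, ⟨d 0, by omega⟩), by simpa using hdn⟩,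
      Finset.mem_univ _, ?_⟩
    ext i
    fin_cases i <;> simp [he, Finsupp.single_apply]
  set f : (Fin 2 →₀ ℕ) → ℝ := fun d => MvPolynomial.coeff d p * (y ^ (d 1) * x ^ (d 0)) with hf
  have key : ∑ v : MIdx n, coeffVec n p v * (y ^ (v.1.1 : ℕ) * x ^ (v.1.2 : ℕ))
      = ∑ d ∈ Finset.univ.image e, f d := by
    rw [Finset.sum_image (fun a _ b _ h => heinj h)]
    refine Finset.sum_congr rfl fun v _ => ?_
    simp [f, coeffVec, he0, he1, he]
  rw [key, ← Finset.sum_subset hsub (fun d _ hd => by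
    simp [f, MvPolynomial.notMem_support_iff.mp hd])]
  rw [MvPolynomial.eval_eq']
  refine Finset.sum_congr rfl fun d _ => ?_
  rw [Fin.prod_univ_two]
  simp only [f, Matrix.cons_val_zero, Matrix.cons_val_one, Matrix.head_cons]
  ring


/-- For a measure `μ` with finite moments up to degree 2n and a polynomial `p` of
degree ≤ n, `M(n) p̂ = 0` iff `μ` is supported in the zero set of `p`. -/
theorem momentMatrix_kernel_iff_support (n : ℕ) (μ : Measure (ℝ × ℝ))
    (hint : ∀ i j : ℕ, i + j ≤ 2 * n →
      Integrable (fun w : ℝ × ℝ => w.2 ^ i * w.1 ^ j) μ)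
    (p : MvPolynomial (Fin 2) ℝ) (hp : p.totalDegree ≤ n) :
    (momentMat n (fun i j => ∫ w : ℝ × ℝ, w.2 ^ i * w.1 ^ j ∂μ)).mulVec
        (coeffVec n p) = 0 ↔
      μ {w : ℝ × ℝ | MvPolynomial.eval ![w.1, w.2] p ≠ 0} = 0 := by
  classical
  set F : ℝ × ℝ → ℝ := fun w => MvPolynomial.eval ![w.1, w.2] p with hFdef
  have hA : ∀ w : ℝ × ℝ,
      F w = ∑ v : MIdx n, coeffVec n p v * (w.2 ^ (v.1.1 : ℕ) * w.1 ^ (v.1.2 : ℕ)) :=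
    fun w => evalSum n p hp w.1 w.2
  -- integrability of monomial times F
  have hintM : ∀ i j : ℕ, i + j ≤ n →
      Integrable (fun w : ℝ × ℝ => w.2 ^ i * w.1 ^ j * F w) μ := by
    intro i j hij
    have : (fun w : ℝ × ℝ => w.2 ^ i * w.1 ^ j * F w) =
        fun w => ∑ v : MIdx n, coeffVec n p v *
          (w.2 ^ (i + (v.1.1 : ℕ)) * w.1 ^ (j + (v.1.2 : ℕ))) := by
      funext w
      rw [hA w, Finset.mul_sum]
      refine Finset.sum_congr rfl fun v _ => ?_
      ring
    rw [this]
    refine integrable_finset_sum _ fun v _ => ?_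
    have hv : i + (v.1.1 : ℕ) + (j + (v.1.2 : ℕ)) ≤ 2 * n := by
      have := v.2; omega
    exact (hint _ _ hv).const_mul _
  -- mulVec entries as integrals
  have hC : ∀ u : MIdx n,
      (momentMat n (fun i j => ∫ w : ℝ × ℝ, w.2 ^ i * w.1 ^ j ∂μ)).mulVec
        (coeffVec n p) u =
      ∫ w : ℝ × ℝ, w.2 ^ (u.1.1 : ℕ) * w.1 ^ (u.1.2 : ℕ) * F w ∂μ := by
    intro u
    have hrw : ∀ w : ℝ × ℝ, w.2 ^ (u.1.1 : ℕ) * w.1 ^ (u.1.2 : ℕ) * F w =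
        ∑ v : MIdx n, coeffVec n p v *
          (w.2 ^ ((u.1.1 : ℕ) + (v.1.1 : ℕ)) * w.1 ^ ((u.1.2 : ℕ) + (v.1.2 : ℕ))) := by
      intro w
      rw [hA w, Finset.mul_sum]
      refine Finset.sum_congr rfl fun v _ => ?_
      ring
    have hi : ∀ v : MIdx n,
        Integrable (fun w : ℝ × ℝ => coeffVec n p v *
          (w.2 ^ ((u.1.1 : ℕ) + (v.1.1 : ℕ)) * w.1 ^ ((u.1.2 : ℕ) + (v.1.2 : ℕ)))) μ := by
      intro v
      have hv : (u.1.1 : ℕ) + (v.1.1 : ℕ) + ((u.1.2 : ℕ) + (v.1.2 : ℕ)) ≤ 2 * n := by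
        have := u.2; have := v.2; omega
      exact (hint _ _ hv).const_mul _
    calc (momentMat n (fun i j => ∫ w : ℝ × ℝ, w.2 ^ i * w.1 ^ j ∂μ)).mulVec
          (coeffVec n p) u
        = ∑ v : MIdx n, ∫ w : ℝ × ℝ, coeffVec n p v *
            (w.2 ^ ((u.1.1 : ℕ) + (v.1.1 : ℕ)) * w.1 ^ ((u.1.2 : ℕ) + (v.1.2 : ℕ))) ∂μ := by
          simp only [Matrix.mulVec, dotProduct, momentMat, Matrix.of_apply]
          refine Finset.sum_congr rfl fun v _ => ?_
          rw [integral_const_mul]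
          ring
      _ = ∫ w : ℝ × ℝ, ∑ v : MIdx n, coeffVec n p v *
            (w.2 ^ ((u.1.1 : ℕ) + (v.1.1 : ℕ)) * w.1 ^ ((u.1.2 : ℕ) + (v.1.2 : ℕ))) ∂μ :=
          (integral_finset_sum _ fun v _ => hi v).symm
      _ = ∫ w : ℝ × ℝ, w.2 ^ (u.1.1 : ℕ) * w.1 ^ (u.1.2 : ℕ) * F w ∂μ := by
          refine integral_congr_ae (Filter.Eventually.of_forall fun w => ?_)
          exact (hrw w).symm
  constructor
  · intro h0
    -- compute ∫ F² = 0
    have hzero : ∀ u : MIdx n,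
        ∫ w : ℝ × ℝ, w.2 ^ (u.1.1 : ℕ) * w.1 ^ (u.1.2 : ℕ) * F w ∂μ = 0 := by
      intro u; rw [← hC u, h0]; rfl
    have hFF : ∀ w : ℝ × ℝ, F w * F w =
        ∑ u : MIdx n, coeffVec n p u * (w.2 ^ (u.1.1 : ℕ) * w.1 ^ (u.1.2 : ℕ) * F w) := by
      intro w
      simp only [← mul_assoc]
      rw [← Finset.sum_mul]
      congr 1
      rw [hA w]
      exact Finset.sum_congr rfl fun v _ => (mul_assoc _ _ _).symm
    have hFFint : Integrable (fun w => F w * F w) μ := by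
      have : (fun w : ℝ × ℝ => F w * F w) = fun w =>
          ∑ u : MIdx n, coeffVec n p u * (w.2 ^ (u.1.1 : ℕ) * w.1 ^ (u.1.2 : ℕ) * F w) := by
        funext w; exact hFF w
      rw [this]
      exact integrable_finset_sum _ fun u _ => ((hintM _ _ u.2).const_mul _)
    have hint0 : ∫ w : ℝ × ℝ, F w * F w ∂μ = 0 := by
      have : (fun w : ℝ × ℝ => F w * F w) = fun w =>
          ∑ u : MIdx n, coeffVec n p u * (w.2 ^ (u.1.1 : ℕ) * w.1 ^ (u.1.2 : ℕ) * F w) := by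
        funext w; exact hFF w
      rw [this, integral_finset_sum _ fun u _ => ((hintM _ _ u.2).const_mul _)]
      refine Finset.sum_eq_zero fun u _ => ?_
      rw [integral_const_mul, hzero u, mul_zero]
    have hae : (fun w => F w * F w) =ᵐ[μ] 0 := by
      refine (integral_eq_zero_iff_of_nonneg_ae ?_ hFFint).mp hint0
      exact Filter.Eventually.of_forall fun w => mul_self_nonneg _
    have : {w : ℝ × ℝ | MvPolynomial.eval ![w.1, w.2] p ≠ 0} =
        {w : ℝ × ℝ | ¬ (F w * F w = 0)} := by
      ext w; simp [mul_self_eq_zero, hFdef]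
    rw [this]
    exact (MeasureTheory.ae_iff).mp hae
  · intro h0
    have hae : F =ᵐ[μ] 0 := by
      rw [Filter.EventuallyEq, MeasureTheory.ae_iff]
      simpa [hFdef] using h0
    funext u
    rw [hC u]
    have : (fun w : ℝ × ℝ => w.2 ^ (u.1.1 : ℕ) * w.1 ^ (u.1.2 : ℕ) * F w) =ᵐ[μ]
        (fun _ => (0 : ℝ)) := by
      filter_upwards [hae] with w hw
      simp [hw]
    rw [integral_congr_ae this, integral_zero]
    rfl
end

section
/- If β^{(2n)} has a representing measure μ, then the moment matrix M(n)(β) is recursively generated: for polynomials p, q with deg p, deg q, deg(pq) ≤ n, if M(n) p̂ = 0 then M(n) (pq)^ = 0. -/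
open MeasureTheory Matrix

namespace MomentAux

open MvPolynomial

theorem degb (p : MvPolynomial (Fin 2) ℝ) (d : Fin 2 →₀ ℕ) (hd : d ∈ p.support) :
    d 0 + d 1 ≤ p.totalDegree := by
  have h := MvPolynomial.le_totalDegree hd
  have : d.sum (fun _ e => e) = d 0 + d 1 := by
    rw [Finsupp.sum_fintype]
    · exact Fin.sum_univ_two _
    · intro; rfl
  omega

theorem evalb (p : MvPolynomial (Fin 2) ℝ) (f : Fin 2 → ℝ) :
    eval f p = ∑ d ∈ p.support, p.coeff d * (f 0 ^ d 0 * f 1 ^ d 1) := by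
  rw [MvPolynomial.eval_eq']
  refine Finset.sum_congr rfl fun d _ => ?_
  rw [Fin.prod_univ_two]

noncomputable def eidx (n : ℕ) (v : MIdx n) : Fin 2 →₀ ℕ :=
  Finsupp.single (0 : Fin 2) ((v.1.2 : ℕ)) + Finsupp.single (1 : Fin 2) ((v.1.1 : ℕ))

theorem eidx_zero (n : ℕ) (v : MIdx n) : eidx n v 0 = (v.1.2 : ℕ) := by
  simp [eidx, Finsupp.single_apply]

theorem eidx_one (n : ℕ) (v : MIdx n) : eidx n v 1 = (v.1.1 : ℕ) := by
  simp [eidx, Finsupp.single_apply]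

theorem eidx_inj (n : ℕ) : Function.Injective (eidx n) := by
  intro u v h
  have h0 : eidx n u 0 = eidx n v 0 := by rw [h]
  have h1 : eidx n u 1 = eidx n v 1 := by rw [h]
  rw [eidx_zero, eidx_zero] at h0
  rw [eidx_one, eidx_one] at h1
  apply Subtype.ext
  apply Prod.ext <;> [exact Fin.ext h1; exact Fin.ext h0]

theorem key (n : ℕ) (p : MvPolynomial (Fin 2) ℝ) (w : ℝ × ℝ) (v : MIdx n) :
    coeffVec n p v * (w.2 ^ (v.1.1 : ℕ) * w.1 ^ (v.1.2 : ℕ))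
      = p.coeff (eidx n v) * ((![w.1, w.2] : Fin 2 → ℝ) 0 ^ (eidx n v) 0
        * (![w.1, w.2] : Fin 2 → ℝ) 1 ^ (eidx n v) 1) := by
  rw [eidx_zero, eidx_one]
  simp [coeffVec, eidx, mul_comm]

theorem fin2_eq (d : Fin 2 →₀ ℕ) :
    Finsupp.single (0 : Fin 2) (d 0) + Finsupp.single (1 : Fin 2) (d 1) = d := by
  ext i
  fin_cases i <;> simp [Finsupp.single_apply]

theorem support_sub (n : ℕ) (p : MvPolynomial (Fin 2) ℝ) (hp : p.totalDegree ≤ n) :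
    p.support ⊆ Finset.univ.image (eidx n) := by
  intro d hd
  have hb := degb p d hd
  refine Finset.mem_image.2 ⟨⟨(⟨d 1, by omega⟩, ⟨d 0, by omega⟩), by simp; omega⟩,
    Finset.mem_univ _, ?_⟩
  exact fin2_eq d

theorem eval_sum_midx (n : ℕ) (p : MvPolynomial (Fin 2) ℝ) (hp : p.totalDegree ≤ n)
    (w : ℝ × ℝ) :
    eval ![w.1, w.2] p
      = ∑ v : MIdx n, coeffVec n p v * (w.2 ^ (v.1.1 : ℕ) * w.1 ^ (v.1.2 : ℕ)) := by
  have h1 : eval ![w.1, w.2] p = ∑ d ∈ Finset.univ.image (eidx n),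
      p.coeff d * ((![w.1, w.2] : Fin 2 → ℝ) 0 ^ d 0 * (![w.1, w.2] : Fin 2 → ℝ) 1 ^ d 1) := by
    rw [evalb]
    refine Finset.sum_subset (support_sub n p hp) (fun d _ hd => ?_)
    rw [MvPolynomial.notMem_support_iff.1 hd, zero_mul]
  rw [h1, Finset.sum_image (g := eidx n)
    (f := fun d => p.coeff d * ((![w.1, w.2] : Fin 2 → ℝ) 0 ^ d 0
      * (![w.1, w.2] : Fin 2 → ℝ) 1 ^ d 1)) (fun x _ y _ h => eidx_inj n h)]
  exact Finset.sum_congr rfl (fun v _ => (key n p w v).symm)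

theorem integrable_eval {n : ℕ} {β : ℕ → ℕ → ℝ} {μ : Measure (ℝ × ℝ)}
    (hrep : IsRepMeasure n β μ)
    (r : MvPolynomial (Fin 2) ℝ) (hr : r.totalDegree ≤ 2 * n) :
    Integrable (fun w : ℝ × ℝ => eval ![w.1, w.2] r) μ := by
  have heq : (fun w : ℝ × ℝ => eval ![w.1, w.2] r) =
      fun w => ∑ d ∈ r.support, r.coeff d * (w.2 ^ d 1 * w.1 ^ d 0) := by
    funext w
    rw [evalb]
    simp [mul_comm]
  rw [heq]
  apply integrable_finset_sum
  intro d hd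
  have hle : d 1 + d 0 ≤ 2 * n := by have := degb r d hd; omega
  exact (hrep (d 1) (d 0) hle).1.const_mul _

theorem integrable_mono_mul {n : ℕ} {β : ℕ → ℕ → ℝ} {μ : Measure (ℝ × ℝ)}
    (hrep : IsRepMeasure n β μ) (i j : ℕ) (hij : i + j ≤ n)
    (p : MvPolynomial (Fin 2) ℝ) (hp : p.totalDegree ≤ n) :
    Integrable (fun w : ℝ × ℝ => w.2 ^ i * w.1 ^ j * eval ![w.1, w.2] p) μ := by
  have heq : (fun w : ℝ × ℝ => w.2 ^ i * w.1 ^ j * eval ![w.1, w.2] p)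
      = fun w => eval ![w.1, w.2] (X 1 ^ i * X 0 ^ j * p) := by
    funext w
    simp [mul_comm, mul_assoc, mul_left_comm]
  rw [heq]
  apply integrable_eval hrep
  calc (X 1 ^ i * X 0 ^ j * p).totalDegree
      ≤ (X 1 ^ i * X 0 ^ j : MvPolynomial (Fin 2) ℝ).totalDegree + p.totalDegree :=
        totalDegree_mul _ _
    _ ≤ ((X (1 : Fin 2) ^ i : MvPolynomial (Fin 2) ℝ).totalDegree
          + (X (0 : Fin 2) ^ j : MvPolynomial (Fin 2) ℝ).totalDegree) + p.totalDegree := by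
        exact Nat.add_le_add_right (totalDegree_mul _ _) _
    _ ≤ 2 * n := by
        rw [totalDegree_X_pow, totalDegree_X_pow]
        omega

theorem mulVec_int {n : ℕ} {β : ℕ → ℕ → ℝ} {μ : Measure (ℝ × ℝ)}
    (hrep : IsRepMeasure n β μ) (p : MvPolynomial (Fin 2) ℝ) (hp : p.totalDegree ≤ n)
    (u : MIdx n) :
    (momentMat n β).mulVec (coeffVec n p) u
      = ∫ w : ℝ × ℝ, w.2 ^ (u.1.1 : ℕ) * w.1 ^ (u.1.2 : ℕ) * eval ![w.1, w.2] p ∂μ := by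
  have hu := u.2
  have hint : ∀ v : MIdx n, Integrable (fun w : ℝ × ℝ =>
      (w.2 ^ ((u.1.1 : ℕ) + (v.1.1 : ℕ)) * w.1 ^ ((u.1.2 : ℕ) + (v.1.2 : ℕ)))
        * coeffVec n p v) μ := by
    intro v
    have hv := v.2
    exact ((hrep _ _ (by omega)).1).mul_const _
  calc (momentMat n β).mulVec (coeffVec n p) u
      = ∑ v : MIdx n, β ((u.1.1 : ℕ) + (v.1.1 : ℕ)) ((u.1.2 : ℕ) + (v.1.2 : ℕ))
          * coeffVec n p v := rfl
    _ = ∑ v : MIdx n, ∫ w : ℝ × ℝ,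
          (w.2 ^ ((u.1.1 : ℕ) + (v.1.1 : ℕ)) * w.1 ^ ((u.1.2 : ℕ) + (v.1.2 : ℕ)))
            * coeffVec n p v ∂μ := by
        refine Finset.sum_congr rfl fun v _ => ?_
        have hv := v.2
        rw [(hrep _ _ (by omega)).2]
        exact (integral_mul_const _ _).symm
    _ = ∫ w : ℝ × ℝ, ∑ v : MIdx n,
          (w.2 ^ ((u.1.1 : ℕ) + (v.1.1 : ℕ)) * w.1 ^ ((u.1.2 : ℕ) + (v.1.2 : ℕ)))
            * coeffVec n p v ∂μ := (integral_finset_sum _ (fun v _ => hint v)).symm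
    _ = ∫ w : ℝ × ℝ, w.2 ^ (u.1.1 : ℕ) * w.1 ^ (u.1.2 : ℕ) * eval ![w.1, w.2] p ∂μ := by
        refine integral_congr_ae (Filter.Eventually.of_forall fun w => ?_)
        dsimp only
        rw [eval_sum_midx n p hp w, Finset.mul_sum]
        refine Finset.sum_congr rfl fun v _ => ?_
        rw [pow_add, pow_add]
        ring

theorem evalp_ae_zero {n : ℕ} {β : ℕ → ℕ → ℝ} {μ : Measure (ℝ × ℝ)}
    (hrep : IsRepMeasure n β μ) (p : MvPolynomial (Fin 2) ℝ) (hp : p.totalDegree ≤ n)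
    (h0 : (momentMat n β).mulVec (coeffVec n p) = 0) :
    (fun w : ℝ × ℝ => eval ![w.1, w.2] p) =ᵐ[μ] 0 := by
  have hsqint : Integrable (fun w : ℝ × ℝ => (eval ![w.1, w.2] p) ^ 2) μ := by
    have heq : (fun w : ℝ × ℝ => (eval ![w.1, w.2] p) ^ 2)
        = fun w => eval ![w.1, w.2] (p ^ 2) := by
      funext w; rw [map_pow]
    rw [heq]
    apply integrable_eval hrep
    calc (p ^ 2).totalDegree ≤ 2 * p.totalDegree := totalDegree_pow _ _
      _ ≤ 2 * n := by omega
  have hsq : ∫ w : ℝ × ℝ, (eval ![w.1, w.2] p) ^ 2 ∂μ = 0 := by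
    have heq : (fun w : ℝ × ℝ => (eval ![w.1, w.2] p) ^ 2)
        = fun w => ∑ u : MIdx n, coeffVec n p u
            * (w.2 ^ (u.1.1 : ℕ) * w.1 ^ (u.1.2 : ℕ) * eval ![w.1, w.2] p) := by
      funext w
      rw [sq]
      nth_rewrite 1 [eval_sum_midx n p hp w]
      rw [Finset.sum_mul]
      refine Finset.sum_congr rfl fun u _ => ?_
      ring
    rw [heq, integral_finset_sum]
    · refine Finset.sum_eq_zero fun u _ => ?_
      rw [integral_const_mul, ← mulVec_int hrep p hp u, h0]
      simp
    · intro u _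
      have hu := u.2
      exact (integrable_mono_mul hrep _ _ (by omega) p hp).const_mul _
  have hae : (fun w : ℝ × ℝ => (eval ![w.1, w.2] p) ^ 2) =ᵐ[μ] 0 :=
    (integral_eq_zero_iff_of_nonneg (fun w => sq_nonneg _) hsqint).1 hsq
  filter_upwards [hae] with w hw
  have : (eval ![w.1, w.2] p) ^ 2 = 0 := hw
  exact pow_eq_zero_iff (by norm_num) |>.1 this

end MomentAux

/-- If `β^{(2n)}` has a representing measure, then `M(n)(β)` is recursively
generated. -/
theorem momentMatrix_recursivelyGenerated_of_repMeasure (n : ℕ) (β : ℕ → ℕ → ℝ)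
    (hβ0 : 0 < β 0 0) (μ : Measure (ℝ × ℝ)) (hrep : IsRepMeasure n β μ) :
    RecursivelyGenerated n (momentMat n β) := by
  intro p q hp hq hpq h0
  have hpz := MomentAux.evalp_ae_zero hrep p hp h0
  funext u
  rw [MomentAux.mulVec_int hrep (p * q) hpq u]
  have : (fun w : ℝ × ℝ => w.2 ^ (u.1.1 : ℕ) * w.1 ^ (u.1.2 : ℕ)
      * MvPolynomial.eval ![w.1, w.2] (p * q)) =ᵐ[μ] 0 := by
    filter_upwards [hpz] with w hw
    simp only [Pi.zero_apply] at hw ⊢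
    simp only [_root_.map_mul]
    rw [hw]
    ring
  rw [integral_eq_zero_of_ae this]
  rfl
end

section
/- Let Φ(x,y) = (a₁ + b₁x + c₁y, a₂ + b₂x + c₂y) with b₁c₂ ≠ b₂c₁, and given β^{(2n)}, define β̃_{ij} := L_β(φ₂ⁱ φ₁ʲ) where L_β is the Riesz functional of β. Then the moment matrices satisfy M̃(n) = J* M(n) J, where J is the invertible linear map on coefficient vectors defined by J(p̂) = (p∘Φ)^. In particular rank M̃(n) = rank M(n), and M̃(n) is positive semidefinite if and only if M(n) is. -/
open MeasureTheory Matrix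

/-- The degree-one polynomial `a + b·x + c·y` (with `X 0 = x`, `X 1 = y`). -/
noncomputable def degOnePoly (a b c : ℝ) : MvPolynomial (Fin 2) ℝ :=
  MvPolynomial.C a + MvPolynomial.C b * MvPolynomial.X 0 + MvPolynomial.C c * MvPolynomial.X 1

/-- Substitution `p ↦ p ∘ Φ` where `Φ = (φ₁, φ₂)`, `φᵢ = aᵢ + bᵢx + cᵢy`. -/
noncomputable def substPhi (a₁ b₁ c₁ a₂ b₂ c₂ : ℝ) (p : MvPolynomial (Fin 2) ℝ) :
    MvPolynomial (Fin 2) ℝ :=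
  MvPolynomial.bind₁
    (fun k : Fin 2 => if k = 0 then degOnePoly a₁ b₁ c₁ else degOnePoly a₂ b₂ c₂) p

/-!
In the monomial basis of polynomials of degree `≤ n`, `M(n)` represents the Riesz bilinear form:
`p̂ᵀ M(n) q̂ = L_β(p q)`. The entry of `M̃(n)` at `(yⁱxʲ, yᵏxˡ)` is
`L_β(φ₂^(i+k) φ₁^(j+l)) = L_β((yⁱxʲ ∘ Φ) (yᵏxˡ ∘ Φ))`, and the columns of `J` are the vectors
`(yⁱxʲ ∘ Φ)^`, which gives `M̃(n) = Jᵀ M(n) J`. Composition with `Φ` does not raise the degree and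
has composition with the inverse affine map as a right inverse, so `J` is surjective, hence
invertible; rank and positive semidefiniteness are preserved by congruence with an invertible matrix.
-/

open MvPolynomial

namespace MIdx

variable {n : ℕ}

noncomputable def exponent (u : MIdx n) : Fin 2 →₀ ℕ :=
  Finsupp.single 0 (u.1.2 : ℕ) + Finsupp.single 1 (u.1.1 : ℕ)

@[simp] lemma exponent_zero (u : MIdx n) : u.exponent 0 = u.1.2 := by
  simp [exponent]

@[simp] lemma exponent_one (u : MIdx n) : u.exponent 1 = u.1.1 := by
  simp [exponent]

lemma exponent_injective : Function.Injective (exponent (n := n)) := by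
  intro u v h
  have h0 := congrArg (· 0) h
  have h1 := congrArg (· 1) h
  simp only [exponent_zero, exponent_one] at h0 h1
  exact Subtype.ext (Prod.ext (Fin.ext h1) (Fin.ext h0))

lemma exists_exponent_eq {d : Fin 2 →₀ ℕ} (hd : d 0 + d 1 ≤ n) : ∃ u : MIdx n, u.exponent = d :=
  ⟨⟨(⟨d 1, by omega⟩, ⟨d 0, by omega⟩), by simp only; omega⟩, by
    ext i; fin_cases i <;> simp⟩

end MIdx

lemma finsuppSum_fin_two (d : Fin 2 →₀ ℕ) : (d.sum fun _ e => e) = d 0 + d 1 := by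
  rw [Finsupp.sum_fintype _ _ fun _ => rfl, Fin.sum_univ_two]

lemma coeffVec_apply (n : ℕ) (p : MvPolynomial (Fin 2) ℝ) (u : MIdx n) :
    coeffVec n p u = p.coeff u.exponent := rfl

noncomputable def polyOfCoeffVec (n : ℕ) (w : MIdx n → ℝ) : MvPolynomial (Fin 2) ℝ :=
  ∑ u, monomial u.exponent (w u)

section CoeffVec

variable {n : ℕ}

lemma coeff_polyOfCoeffVec (w : MIdx n → ℝ) (d : Fin 2 →₀ ℕ) :
    (polyOfCoeffVec n w).coeff d = ∑ u, if u.exponent = d then w u else 0 := by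
  simp [polyOfCoeffVec, coeff_sum, coeff_monomial]

lemma coeffVec_polyOfCoeffVec (w : MIdx n → ℝ) : coeffVec n (polyOfCoeffVec n w) = w := by
  funext v
  rw [coeffVec_apply, coeff_polyOfCoeffVec]
  simp [MIdx.exponent_injective.eq_iff]

lemma totalDegree_monomial_exponent_le (u : MIdx n) (c : ℝ) :
    (monomial u.exponent c).totalDegree ≤ n := by
  refine (totalDegree_monomial_le _ _).trans ?_
  rw [show (u.exponent.sum fun _ => id) = u.exponent 0 + u.exponent 1 from finsuppSum_fin_two _,
    MIdx.exponent_zero, MIdx.exponent_one, add_comm]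
  exact u.2

lemma totalDegree_polyOfCoeffVec_le (w : MIdx n → ℝ) : (polyOfCoeffVec n w).totalDegree ≤ n :=
  totalDegree_finsetSum_le fun u _ => totalDegree_monomial_exponent_le u (w u)

lemma polyOfCoeffVec_coeffVec {p : MvPolynomial (Fin 2) ℝ} (hp : p.totalDegree ≤ n) :
    polyOfCoeffVec n (coeffVec n p) = p := by
  ext d
  rw [coeff_polyOfCoeffVec]
  by_cases hd : d 0 + d 1 ≤ n
  · obtain ⟨v, rfl⟩ := MIdx.exists_exponent_eq hd
    simp [MIdx.exponent_injective.eq_iff, coeffVec_apply]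
  · have hcoeff : p.coeff d = 0 := notMem_support_iff.mp fun hmem =>
      hd <| finsuppSum_fin_two d ▸ (le_totalDegree hmem).trans hp
    rw [hcoeff]
    exact Finset.sum_eq_zero fun u _ => by split_ifs with h <;> simp [coeffVec_apply, h, hcoeff]

lemma coeffVec_monomial_exponent (u : MIdx n) :
    coeffVec n (monomial u.exponent 1) = Pi.single u 1 := by
  funext v
  simp [coeffVec_apply, coeff_monomial, Pi.single_apply, MIdx.exponent_injective.eq_iff, eq_comm]

end CoeffVec

section Riesz

variable (β : ℕ → ℕ → ℝ)

lemma riesz_eq_sum_of_support_subset {p : MvPolynomial (Fin 2) ℝ} {s : Finset (Fin 2 →₀ ℕ)}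
    (hs : p.support ⊆ s) : riesz β p = ∑ d ∈ s, p.coeff d * β (d 1) (d 0) :=
  Finset.sum_subset hs fun d _ hd => by rw [notMem_support_iff.mp hd, zero_mul]

lemma riesz_add (p q : MvPolynomial (Fin 2) ℝ) : riesz β (p + q) = riesz β p + riesz β q := by
  classical
  rw [riesz_eq_sum_of_support_subset β support_add,
    riesz_eq_sum_of_support_subset β Finset.subset_union_left,
    riesz_eq_sum_of_support_subset β Finset.subset_union_right, ← Finset.sum_add_distrib]
  simp only [coeff_add, add_mul]

noncomputable def rieszAddHom : MvPolynomial (Fin 2) ℝ →+ ℝ where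
  toFun := riesz β
  map_zero' := by simp [riesz]
  map_add' := riesz_add β

lemma riesz_sum {ι : Type*} (s : Finset ι) (f : ι → MvPolynomial (Fin 2) ℝ) :
    riesz β (∑ i ∈ s, f i) = ∑ i ∈ s, riesz β (f i) :=
  map_sum (rieszAddHom β) f s

lemma riesz_monomial (d : Fin 2 →₀ ℕ) (c : ℝ) :
    riesz β (monomial d c) = c * β (d 1) (d 0) := by
  classical
  rw [riesz_eq_sum_of_support_subset β support_monomial_subset, Finset.sum_singleton,
    coeff_monomial, if_pos rfl]

lemma riesz_polyOfCoeffVec_mul {n : ℕ} (w w' : MIdx n → ℝ) :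
    riesz β (polyOfCoeffVec n w * polyOfCoeffVec n w') = w ⬝ᵥ momentMat n β *ᵥ w' := by
  rw [polyOfCoeffVec, polyOfCoeffVec, Finset.sum_mul_sum]
  simp only [monomial_mul, riesz_sum, riesz_monomial, dotProduct, mulVec, Finset.mul_sum,
    momentMat, of_apply, Finsupp.add_apply, MIdx.exponent_zero, MIdx.exponent_one]
  exact Finset.sum_congr rfl fun u _ => Finset.sum_congr rfl fun v _ => by ring

lemma dotProduct_momentMat_mulVec {n : ℕ} {p q : MvPolynomial (Fin 2) ℝ}
    (hp : p.totalDegree ≤ n) (hq : q.totalDegree ≤ n) :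
    coeffVec n p ⬝ᵥ momentMat n β *ᵥ coeffVec n q = riesz β (p * q) := by
  rw [← riesz_polyOfCoeffVec_mul, polyOfCoeffVec_coeffVec hp, polyOfCoeffVec_coeffVec hq]

end Riesz

lemma totalDegree_bind₁_le {σ τ R : Type*} [CommSemiring R] {f : σ → MvPolynomial τ R}
    (hf : ∀ i, (f i).totalDegree ≤ 1) (p : MvPolynomial σ R) :
    (bind₁ f p).totalDegree ≤ p.totalDegree := by
  classical
  conv_lhs => rw [p.as_sum, map_sum]
  refine totalDegree_finsetSum_le fun d hd => ?_
  rw [bind₁_monomial]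
  refine (totalDegree_mul _ _).trans ?_
  rw [totalDegree_C, zero_add]
  refine (totalDegree_finsetProd _ _).trans <| (Finset.sum_le_sum fun i _ => ?_).trans
    (le_totalDegree hd)
  calc (f i ^ d i).totalDegree ≤ d i * (f i).totalDegree := totalDegree_pow _ _
    _ ≤ d i * 1 := Nat.mul_le_mul_left _ (hf i)
    _ = d i := mul_one _

section Substitution

variable (a₁ b₁ c₁ a₂ b₂ c₂ : ℝ)

lemma totalDegree_degOnePoly_le (a b c : ℝ) : (degOnePoly a b c).totalDegree ≤ 1 := by
  unfold degOnePoly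
  refine (totalDegree_add _ _).trans (max_le ((totalDegree_add _ _).trans (max_le ?_ ?_)) ?_)
  · simp
  all_goals exact (totalDegree_mul _ _).trans (by simp)

lemma totalDegree_substPhi_le (p : MvPolynomial (Fin 2) ℝ) :
    (substPhi a₁ b₁ c₁ a₂ b₂ c₂ p).totalDegree ≤ p.totalDegree := by
  refine totalDegree_bind₁_le (fun i => ?_) p
  split <;> exact totalDegree_degOnePoly_le _ _ _

lemma substPhi_monomial_one (d : Fin 2 →₀ ℕ) :
    substPhi a₁ b₁ c₁ a₂ b₂ c₂ (monomial d 1) =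
      degOnePoly a₁ b₁ c₁ ^ d 0 * degOnePoly a₂ b₂ c₂ ^ d 1 := by
  rw [substPhi, bind₁_monomial, C_1, one_mul,
    Finset.prod_subset d.support.subset_univ fun i _ hi => by
      rw [Finsupp.notMem_support_iff.mp hi, pow_zero], Fin.prod_univ_two]
  simp

lemma substPhi_degOnePoly (a b c : ℝ) :
    substPhi a₁ b₁ c₁ a₂ b₂ c₂ (degOnePoly a b c) =
      degOnePoly (a + b * a₁ + c * a₂) (b * b₁ + c * b₂) (b * c₁ + c * c₂) := by
  simp only [substPhi, degOnePoly, map_add, map_mul, algHom_C, algebraMap_eq, bind₁_X_right,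
    Fin.isValue, ↓reduceIte, one_ne_zero]
  ring

lemma substPhi_substPhi (a₁' b₁' c₁' a₂' b₂' c₂' : ℝ) (p : MvPolynomial (Fin 2) ℝ) :
    substPhi a₁ b₁ c₁ a₂ b₂ c₂ (substPhi a₁' b₁' c₁' a₂' b₂' c₂' p) =
      substPhi (a₁' + b₁' * a₁ + c₁' * a₂) (b₁' * b₁ + c₁' * b₂) (b₁' * c₁ + c₁' * c₂)
        (a₂' + b₂' * a₁ + c₂' * a₂) (b₂' * b₁ + c₂' * b₂) (b₂' * c₁ + c₂' * c₂) p := by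
  conv_lhs => rw [substPhi, substPhi, bind₁_bind₁]
  congr 2
  funext i
  fin_cases i <;> exact substPhi_degOnePoly a₁ b₁ c₁ a₂ b₂ c₂ _ _ _

lemma substPhi_id (p : MvPolynomial (Fin 2) ℝ) : substPhi 0 1 0 0 0 1 p = p := by
  have hX : (fun k : Fin 2 => if k = 0 then degOnePoly 0 1 0 else degOnePoly 0 0 1) = X := by
    funext i
    fin_cases i <;> simp [degOnePoly]
  rw [substPhi, hX, bind₁_X_left, AlgHom.id_apply]

lemma exists_substPhi_rightInverse (hΦ : b₁ * c₂ ≠ b₂ * c₁) :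
    ∃ a₁' b₁' c₁' a₂' b₂' c₂' : ℝ, ∀ p : MvPolynomial (Fin 2) ℝ,
      substPhi a₁ b₁ c₁ a₂ b₂ c₂ (substPhi a₁' b₁' c₁' a₂' b₂' c₂' p) = p := by
  have hD : b₁ * c₂ - b₂ * c₁ ≠ 0 := sub_ne_zero.mpr hΦ
  set D := b₁ * c₂ - b₂ * c₁
  -- the affine map inverse to `Φ`, by Cramer's rule
  refine ⟨(c₁ * a₂ - c₂ * a₁) / D, c₂ / D, -c₁ / D, (b₂ * a₁ - b₁ * a₂) / D, -b₂ / D, b₁ / D,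
    fun p => ?_⟩
  rw [substPhi_substPhi]
  convert substPhi_id p using 2 <;> field_simp <;> ring

end Substitution

lemma Matrix.transpose_mul_mul_apply_eq_dotProduct {ι R : Type*} [Fintype ι] [DecidableEq ι]
    [CommSemiring R] (A M : Matrix ι ι R) (u v : ι) :
    (Aᵀ * M * A) u v = (A *ᵥ Pi.single u 1) ⬝ᵥ M *ᵥ (A *ᵥ Pi.single v 1) := by
  rw [mulVec_single_one, mulVec_single_one, dotProduct_mulVec, Matrix.mul_apply]
  rfl

section Transformation

variable {n : ℕ} {a₁ b₁ c₁ a₂ b₂ c₂ : ℝ} {J : Matrix (MIdx n) (MIdx n) ℝ}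

lemma isUnit_of_mulVec_coeffVec_eq_substPhi (hΦ : b₁ * c₂ ≠ b₂ * c₁)
    (hJ : ∀ p : MvPolynomial (Fin 2) ℝ, p.totalDegree ≤ n →
      J *ᵥ coeffVec n p = coeffVec n (substPhi a₁ b₁ c₁ a₂ b₂ c₂ p)) :
    IsUnit J := by
  obtain ⟨a₁', b₁', c₁', a₂', b₂', c₂', hinv⟩ := exists_substPhi_rightInverse a₁ b₁ c₁ a₂ b₂ c₂ hΦ
  refine mulVec_surjective_iff_isUnit.mp fun w =>
    ⟨coeffVec n (substPhi a₁' b₁' c₁' a₂' b₂' c₂' (polyOfCoeffVec n w)), ?_⟩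
  rw [hJ _ ((totalDegree_substPhi_le _ _ _ _ _ _ _).trans (totalDegree_polyOfCoeffVec_le w)),
    hinv, coeffVec_polyOfCoeffVec]

lemma momentMat_riesz_degOnePoly_eq (β : ℕ → ℕ → ℝ)
    (hJ : ∀ p : MvPolynomial (Fin 2) ℝ, p.totalDegree ≤ n →
      J *ᵥ coeffVec n p = coeffVec n (substPhi a₁ b₁ c₁ a₂ b₂ c₂ p)) :
    momentMat n (fun i j => riesz β (degOnePoly a₂ b₂ c₂ ^ i * degOnePoly a₁ b₁ c₁ ^ j)) =
      Jᵀ * momentMat n β * J := by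
  ext u v
  have hcol (w : MIdx n) :
      J *ᵥ Pi.single w 1 = coeffVec n (substPhi a₁ b₁ c₁ a₂ b₂ c₂ (monomial w.exponent 1)) := by
    rw [← coeffVec_monomial_exponent, hJ _ (totalDegree_monomial_exponent_le w 1)]
  have hdeg (w : MIdx n) :
      (substPhi a₁ b₁ c₁ a₂ b₂ c₂ (monomial w.exponent 1)).totalDegree ≤ n :=
    (totalDegree_substPhi_le _ _ _ _ _ _ _).trans (totalDegree_monomial_exponent_le w 1)
  rw [transpose_mul_mul_apply_eq_dotProduct, hcol, hcol,
    dotProduct_momentMat_mulVec β (hdeg u) (hdeg v), substPhi_monomial_one, substPhi_monomial_one]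
  simp only [momentMat, of_apply, MIdx.exponent_zero, MIdx.exponent_one, pow_add]
  ring_nf

end Transformation

/-- Invariance of moment matrices under degree-one transformations: if
`β̃_{ij} = L_β(φ₂ⁱ φ₁ʲ)` and `J` is the linear map on coefficient vectors with
`J p̂ = (p∘Φ)^`, then `M̃(n) = Jᵀ M(n) J`, `J` is invertible,
`rank M̃(n) = rank M(n)`, and `M̃(n)` is PSD iff `M(n)` is. -/
theorem momentMatrix_degreeOne_invariance (n : ℕ) (β : ℕ → ℕ → ℝ)
    (a₁ b₁ c₁ a₂ b₂ c₂ : ℝ) (hΦ : b₁ * c₂ ≠ b₂ * c₁)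
    (J : Matrix (MIdx n) (MIdx n) ℝ)
    (hJ : ∀ p : MvPolynomial (Fin 2) ℝ, p.totalDegree ≤ n →
      J.mulVec (coeffVec n p) = coeffVec n (substPhi a₁ b₁ c₁ a₂ b₂ c₂ p)) :
    momentMat n (fun i j =>
        riesz β (degOnePoly a₂ b₂ c₂ ^ i * degOnePoly a₁ b₁ c₁ ^ j)) =
      Jᵀ * momentMat n β * J ∧
    IsUnit J ∧
    (momentMat n (fun i j =>
        riesz β (degOnePoly a₂ b₂ c₂ ^ i * degOnePoly a₁ b₁ c₁ ^ j))).rank =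
      (momentMat n β).rank ∧
    ((momentMat n (fun i j =>
        riesz β (degOnePoly a₂ b₂ c₂ ^ i * degOnePoly a₁ b₁ c₁ ^ j))).PosSemidef ↔
      (momentMat n β).PosSemidef) := by
  have hcongr := momentMat_riesz_degOnePoly_eq β hJ
  have hJunit : IsUnit J := isUnit_of_mulVec_coeffVec_eq_substPhi hΦ hJ
  have hJdet : IsUnit J.det := (isUnit_iff_isUnit_det J).mp hJunit
  refine ⟨hcongr, hJunit, ?_, ?_⟩
  · rw [hcongr, rank_mul_eq_left_of_isUnit_det _ _ hJdet,
      rank_mul_eq_right_of_isUnit_det _ _ (det_transpose J ▸ hJdet)]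
  · rw [hcongr, ← conjTranspose_eq_transpose_of_trivial]
    exact hJunit.posSemidef_star_left_conjugate_iff
end

section
/- Let n ≥ 2 and let M(n) be a positive semidefinite, recursively generated moment matrix satisfying the column relation YX = 1 (i.e., M(n)(yx−1)^ = 0). Then every column of M(n) is equal to a column indexed by a monomial in S = {1, x, y, x², y², …, xⁿ, yⁿ}; in particular rank M(n) ≤ 2n+1. -/
open MeasureTheory Matrix

namespace ColProof
open MvPolynomial

def idx (n i j : ℕ) (h : i + j ≤ n) : MIdx n :=
  ⟨(⟨i, by omega⟩, ⟨j, by omega⟩), by simpa using h⟩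

lemma pairInj {a b c d : ℕ}
    (h : (Finsupp.single (0 : Fin 2) a + Finsupp.single 1 b)
       = Finsupp.single (0 : Fin 2) c + Finsupp.single 1 d) : a = c ∧ b = d := by
  constructor
  · have := DFunLike.congr_fun h 0
    simpa [Finsupp.single_apply] using this
  · have := DFunLike.congr_fun h 1
    simpa [Finsupp.single_apply] using this

lemma sum_pair (a b : ℕ) :
    (Finsupp.single (0 : Fin 2) a + Finsupp.single 1 b).sum (fun _ e => e) = a + b := by
  classical
  rw [Finsupp.sum_fintype _ _ (fun _ => rfl), Fin.sum_univ_two]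
  simp [Finsupp.single_apply]

lemma coeffVec_monomial (n i j : ℕ) (h : i + j ≤ n) :
    coeffVec n (monomial (Finsupp.single (0 : Fin 2) j + Finsupp.single 1 i) (1:ℝ))
      = Pi.single (idx n i j h) 1 := by
  funext v
  rw [coeffVec, MvPolynomial.coeff_monomial, Pi.single_apply]
  by_cases hv : v = idx n i j h
  · subst hv
    rw [if_pos rfl, if_pos]
    simp [idx]
  · rw [if_neg hv, if_neg]
    intro he
    obtain ⟨h1, h2⟩ := pairInj he
    apply hv
    apply Subtype.ext
    apply Prod.ext <;> apply Fin.ext <;> simp [idx, ← h1, ← h2]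

lemma col_eq_step (n : ℕ) (hn : 2 ≤ n) (β : ℕ → ℕ → ℝ)
    (hrg : RecursivelyGenerated n (momentMat n β))
    (hyx : (momentMat n β).mulVec
      (coeffVec n (MvPolynomial.X 1 * MvPolynomial.X 0 - 1)) = 0)
    (i j : ℕ) (hi : 1 ≤ i) (hj : 1 ≤ j) (h : i + j ≤ n) :
    ∀ r, momentMat n β r (idx n i j h)
        = momentMat n β r (idx n (i-1) (j-1) (by omega)) := by
  set p : MvPolynomial (Fin 2) ℝ := X 1 * X 0 - 1 with hp
  set q : MvPolynomial (Fin 2) ℝ :=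
    monomial (Finsupp.single (0 : Fin 2) (j-1) + Finsupp.single 1 (i-1)) 1 with hq
  have hpq : p * q = monomial (Finsupp.single (0:Fin 2) j + Finsupp.single 1 i) 1
      - monomial (Finsupp.single (0:Fin 2) (j-1) + Finsupp.single 1 (i-1)) 1 := by
    have hexp : Finsupp.single (1:Fin 2) 1 + Finsupp.single 0 1
        + (Finsupp.single (0:Fin 2) (j-1) + Finsupp.single 1 (i-1))
        = Finsupp.single (0:Fin 2) j + Finsupp.single 1 i := by
      ext a
      fin_cases a <;> simp [Finsupp.single_apply] <;> omega
    rw [hp, hq, sub_mul, one_mul, X, X, monomial_mul, monomial_mul, one_mul, one_mul, hexp]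
  have hdp : p.totalDegree ≤ n := by
    refine le_trans (totalDegree_sub _ _) ?_
    have h1 : (X 1 * X 0 : MvPolynomial (Fin 2) ℝ).totalDegree ≤ 2 := by
      refine le_trans (totalDegree_mul _ _) ?_
      simp [totalDegree_X]
    have h2 : (1 : MvPolynomial (Fin 2) ℝ).totalDegree = 0 := totalDegree_one
    omega
  have hdq : q.totalDegree ≤ n := by
    rw [hq, totalDegree_monomial _ one_ne_zero, sum_pair]
    omega
  have hdpq : (p * q).totalDegree ≤ n := by
    refine le_trans (totalDegree_mul _ _) ?_
    rw [hq, totalDegree_monomial _ one_ne_zero, sum_pair]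
    have h1 : p.totalDegree ≤ 2 := by
      rw [hp]
      refine le_trans (totalDegree_sub _ _) ?_
      have h1 : (X 1 * X 0 : MvPolynomial (Fin 2) ℝ).totalDegree ≤ 2 := by
        refine le_trans (totalDegree_mul _ _) ?_
        simp [totalDegree_X]
      have h2 : (1 : MvPolynomial (Fin 2) ℝ).totalDegree = 0 := totalDegree_one
      omega
    omega
  have hcol := hrg p q hdp hdq hdpq hyx
  rw [hpq] at hcol
  have hsub : coeffVec n (monomial (Finsupp.single (0:Fin 2) j + Finsupp.single 1 i) (1:ℝ)
      - monomial (Finsupp.single (0:Fin 2) (j-1) + Finsupp.single 1 (i-1)) 1)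
      = coeffVec n (monomial (Finsupp.single (0:Fin 2) j + Finsupp.single 1 i) 1)
      - coeffVec n (monomial (Finsupp.single (0:Fin 2) (j-1) + Finsupp.single 1 (i-1)) 1) := by
    funext v
    simp [coeffVec, MvPolynomial.coeff_sub]
  rw [hsub, Matrix.mulVec_sub, coeffVec_monomial n i j h,
    coeffVec_monomial n (i-1) (j-1) (by omega), sub_eq_zero,
    Matrix.mulVec_single, Matrix.mulVec_single] at hcol
  intro r
  have := congr_fun hcol r
  simpa using this

lemma key (n : ℕ) (hn : 2 ≤ n) (β : ℕ → ℕ → ℝ)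
    (hrg : RecursivelyGenerated n (momentMat n β))
    (hyx : (momentMat n β).mulVec
      (coeffVec n (MvPolynomial.X 1 * MvPolynomial.X 0 - 1)) = 0) :
    ∀ i j (h : i + j ≤ n), ∃ i', ∃ j', ∃ h' : i' + j' ≤ n, (i' = 0 ∨ j' = 0) ∧
      ∀ r, momentMat n β r (idx n i j h) = momentMat n β r (idx n i' j' h') := by
  intro i
  induction i with
  | zero => exact fun j h => ⟨0, j, h, Or.inl rfl, fun r => rfl⟩
  | succ k ih =>
    intro j h
    cases j with
    | zero => exact ⟨k + 1, 0, h, Or.inr rfl, fun r => rfl⟩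
    | succ m =>
      have step := col_eq_step n hn β hrg hyx (k+1) (m+1) (by omega) (by omega) h
      obtain ⟨i', j', h', hp', heq⟩ := ih m (by omega)
      exact ⟨i', j', h', hp', fun r => (step r).trans (heq r)⟩

end ColProof

/-- If `M(n)` (n ≥ 2) is positive semidefinite, recursively generated, and satisfies
the column relation `YX = 1`, then every column of `M(n)` equals a column indexed by
a pure power `xᵏ` or `yᵏ`; in particular `rank M(n) ≤ 2n + 1`. -/
theorem columns_eq_purePower_of_yx_eq_one (n : ℕ) (hn : 2 ≤ n) (β : ℕ → ℕ → ℝ)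
    (hpsd : (momentMat n β).PosSemidef)
    (hrg : RecursivelyGenerated n (momentMat n β))
    (hyx : (momentMat n β).mulVec
      (coeffVec n (MvPolynomial.X 1 * MvPolynomial.X 0 - 1)) = 0) :
    (∀ u : MIdx n, ∃ v : MIdx n, ((v.1.1 : ℕ) = 0 ∨ (v.1.2 : ℕ) = 0) ∧
        ∀ r : MIdx n, momentMat n β r u = momentMat n β r v) ∧
      (momentMat n β).rank ≤ 2 * n + 1 := by
  have main : ∀ u : MIdx n, ∃ v : MIdx n, ((v.1.1 : ℕ) = 0 ∨ (v.1.2 : ℕ) = 0) ∧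
      ∀ r : MIdx n, momentMat n β r u = momentMat n β r v := by
    intro u
    obtain ⟨i', j', h', hp', heq⟩ := ColProof.key n hn β hrg hyx u.1.1 u.1.2 u.2
    refine ⟨ColProof.idx n i' j' h', ?_, fun r => ?_⟩
    · simpa [ColProof.idx] using hp'
    · have hu : momentMat n β r u = momentMat n β r (ColProof.idx n u.1.1 u.1.2 u.2) := by
        simp [momentMat, ColProof.idx]
      exact hu.trans (heq r)
  refine ⟨main, ?_⟩
  -- rank bound
  classical
  choose v hv hcol using main
  let f : MIdx n → Fin (2 * n + 1) := fun u =>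
    if h0 : ((v u).1.1 : ℕ) = 0 then ⟨(v u).1.2, by have := (v u).2; omega⟩
    else ⟨n + (v u).1.1, by have := (v u).2; omega⟩
  let g : Fin (2 * n + 1) → MIdx n := fun k =>
    if h0 : (k : ℕ) ≤ n then ColProof.idx n 0 k (by omega)
    else ColProof.idx n ((k : ℕ) - n) 0 (by omega)
  have hgf : ∀ r u, momentMat n β r u = momentMat n β r (g (f u)) := by
    intro r u
    rw [hcol u r]
    have h2 := (v u).2
    rcases hv u with h0 | h0
    · have : g (f u) = ColProof.idx n 0 ((v u).1.2 : ℕ) (by omega) := by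
        simp only [f, g, dif_pos h0]
        rw [dif_pos (by first | omega | (simp; omega))]
      rw [this]
      simp [momentMat, ColProof.idx, h0]
    · by_cases hz : ((v u).1.1 : ℕ) = 0
      · have : g (f u) = ColProof.idx n 0 ((v u).1.2 : ℕ) (by omega) := by
          simp only [f, g, dif_pos hz]
          rw [dif_pos (by first | omega | (simp; omega))]
        rw [this]
        simp [momentMat, ColProof.idx, hz]
      · have : g (f u) = ColProof.idx n (((v u).1.1 : ℕ)) 0 (by omega) := by
          simp only [f, g, dif_neg hz]
          rw [dif_neg (by first | omega | (simp; omega))]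
          congr 1 <;> simp <;> omega
        rw [this]
        simp [momentMat, ColProof.idx, h0]
  have hfac : momentMat n β = (momentMat n β).submatrix id g *
      (Matrix.of fun k u => if k = f u then (1:ℝ) else 0) := by
    ext r u
    rw [Matrix.mul_apply]
    simp only [Matrix.submatrix_apply, Matrix.of_apply, id]
    rw [Finset.sum_eq_single (f u)]
    · rw [if_pos rfl, mul_one]
      exact hgf r u
    · intro b _ hb; rw [if_neg hb, mul_zero]
    · intro hb; exact absurd (Finset.mem_univ _) hb
  have h1 : (momentMat n β).rank ≤ ((momentMat n β).submatrix id g).rank := by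
    conv_lhs => rw [hfac]
    exact Matrix.rank_mul_le_left _ _
  have h2 : ((momentMat n β).submatrix id g).rank ≤ Fintype.card (Fin (2 * n + 1)) :=
    Matrix.rank_le_card_width _
  simpa using h1.trans h2
end

section
/- Suppose M(n) is positive semidefinite, recursively generated, satisfies YX = 1, and in the column list 1, X, Y, X², Y², …, Xⁿ, Yⁿ the set {1, X, Y, …, X^{k−1}, Y^{k−1}} is linearly independent while X^k = p_{k−1}(X) + q_{k−1}(Y) for polynomials p_{k−1}, q_{k−1} of degree ≤ k−1 (with 2 ≤ k ≤ n). If moreover rank M(n) ≤ card V(M(n)), then {1, X, Y, …, X^{k−1}, Y^{k−1}} is a basis of the column space of M(n), i.e., M(n) is flat: rank M(n) = 2k−1. -/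
open MeasureTheory Matrix

/-!
The columns `1, X, …, X^{k−1}, Y, …, Y^{k−1}` give `rank M(n) ≥ 2k − 1`. Conversely, every point
`(x, y)` of `V(M(n))` lies on the hyperbola `yx = 1` and satisfies `x^k = p(x) + q(1/x)`;
multiplying by `x^{k−1}` shows that `x` is a root of a polynomial of degree `2k − 1`, and `x`
determines `y = 1/x`. Hence `rank M(n) ≤ card V(M(n)) ≤ 2k − 1`.
-/

open Polynomial in
theorem MvPolynomial.totalDegree_aeval_X_le {R σ : Type*} [CommSemiring R] (i : σ) (p : R[X]) :
    (Polynomial.aeval (MvPolynomial.X i : MvPolynomial σ R) p).totalDegree ≤ p.natDegree := by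
  rw [aeval_eq_sum_range]
  refine (totalDegree_finsetSum _ _).trans (Finset.sup_le fun j hj => ?_)
  refine (totalDegree_smul_le _ _).trans ?_
  rw [X_pow_eq_monomial]
  refine (totalDegree_monomial_le _ _).trans ?_
  rw [Finsupp.sum_single_index rfl]
  exact Nat.lt_succ_iff.mp (Finset.mem_range.mp hj)

open Polynomial in
theorem MvPolynomial.eval_aeval_X {R σ : Type*} [CommSemiring R] (f : σ → R) (i : σ) (p : R[X]) :
    eval f (Polynomial.aeval (MvPolynomial.X i : MvPolynomial σ R) p) = p.eval (f i) := by
  change aeval f (Polynomial.aeval (X i) p) = _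
  rw [← Polynomial.aeval_algHom_apply, aeval_X, Polynomial.coe_aeval_eq_eval]

theorem Matrix.card_le_rank_of_linearIndependent_col {m n ι R : Type*} [Fintype m] [Fintype n]
    [Fintype ι] [Field R] (A : Matrix m n R) (f : ι → n)
    (hf : LinearIndependent R fun i => A.col (f i)) : Fintype.card ι ≤ A.rank := by
  rw [A.rank_eq_finrank_span_cols, ← finrank_span_eq_card hf]
  exact Submodule.finrank_mono (Submodule.span_mono (Set.range_comp_subset_range f A.col))

namespace Polynomial

variable {K : Type*} [Field K]

theorem eval_reflect {f : K[X]} {N : ℕ} (hf : f.natDegree ≤ N) {x : K} (hx : x ≠ 0) :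
    (f.reflect N).eval x = x ^ N * f.eval x⁻¹ := by
  have : Invertible x⁻¹ := invertibleOfNonzero (inv_ne_zero hx)
  have h := eval₂_reflect_mul_pow (RingHom.id K) x⁻¹ N f hf
  rw [invOf_eq_inv, inv_inv] at h
  rw [eval, eval, ← h, mul_left_comm, ← mul_pow, mul_inv_cancel₀ hx, one_pow, mul_one]

/-- Multiplying `x ^ k = p(x) + q(x⁻¹)` by `x ^ (k - 1)` clears the denominators of `q(x⁻¹)`. -/
noncomputable def hyperbolaResolvent (k : ℕ) (p q : K[X]) : K[X] :=
  X ^ (2 * k - 1) - (X ^ (k - 1) * p + q.reflect (k - 1))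

variable {k : ℕ} {p q : K[X]}

theorem natDegree_hyperbolaResolvent (hk : 1 ≤ k) (hp : p.natDegree ≤ k - 1)
    (hq : q.natDegree ≤ k - 1) : (hyperbolaResolvent k p q).natDegree = 2 * k - 1 := by
  have hlow : (X ^ (k - 1) * p + q.reflect (k - 1)).natDegree < 2 * k - 1 := by
    refine (natDegree_add_le _ _).trans_lt (max_lt ?_ ?_)
    · refine natDegree_mul_le.trans_lt ?_
      rw [natDegree_X_pow]
      omega
    · exact natDegree_reflect_le.trans_lt (max_lt (by omega) (by omega))
  rw [hyperbolaResolvent, natDegree_sub_eq_left_of_natDegree_lt (by rwa [natDegree_X_pow]),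
    natDegree_X_pow]

theorem isRoot_hyperbolaResolvent (hk : 1 ≤ k) (hq : q.natDegree ≤ k - 1) {x : K} (hx : x ≠ 0)
    (h : x ^ k = p.eval x + q.eval x⁻¹) : (hyperbolaResolvent k p q).IsRoot x := by
  have hpow : x ^ (2 * k - 1) = x ^ (k - 1) * x ^ k := by
    rw [← pow_add]
    congr 1
    omega
  simp only [IsRoot, hyperbolaResolvent, eval_sub, eval_add, eval_mul, eval_pow, eval_X,
    eval_reflect hq hx, hpow, h]
  ring

theorem mk_le_natDegree_of_subset_hyperbola_roots {S : Set (K × K)} {r : K[X]} (hr : r ≠ 0)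
    (hS : ∀ w ∈ S, w.2 * w.1 = 1 ∧ r.IsRoot w.1) :
    Cardinal.mk S ≤ r.natDegree := by
  classical
  have hinj : S.InjOn Prod.fst := fun w hw v hv h => by
    rw [Prod.ext_iff, eq_inv_of_mul_eq_one_left (hS w hw).1,
      eq_inv_of_mul_eq_one_left (hS v hv).1, h]
    exact ⟨rfl, rfl⟩
  have hsub : Prod.fst '' S ⊆ (r.roots.toFinset : Set K) := by
    rintro _ ⟨w, hw, rfl⟩
    simpa [Multiset.mem_toFinset, mem_roots hr] using (hS w hw).2
  calc Cardinal.mk S = Cardinal.mk (Prod.fst '' S) :=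
        (Cardinal.mk_image_eq_of_injOn _ _ hinj).symm
    _ ≤ Cardinal.mk (r.roots.toFinset : Set K) := Cardinal.mk_le_mk_of_subset hsub
    _ = r.roots.toFinset.card := Cardinal.mk_coe_finset
    _ ≤ r.natDegree := by
      exact_mod_cast r.roots.toFinset_card_le.trans (card_roots' r)

end Polynomial

def axisMonomial {n k : ℕ} (hkn : k ≤ n) : Fin k ⊕ Fin (k - 1) → MIdx n
  | .inl j => ⟨(⟨0, by omega⟩, ⟨j, by omega⟩), by simp only; omega⟩
  | .inr j => ⟨(⟨j + 1, by omega⟩, ⟨0, by omega⟩), by simp only; omega⟩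

theorem axisMonomial_injective {n k : ℕ} (hkn : k ≤ n) : Function.Injective (axisMonomial hkn) := by
  rintro (i | i) (j | j) h <;>
    simp only [axisMonomial, Subtype.mk.injEq, Prod.mk.injEq, Fin.mk.injEq] at h <;>
    first | (congr 1; exact Fin.ext (by omega)) | omega

theorem two_mul_sub_one_le_rank_momentMat {n k : ℕ} (hk : 1 ≤ k) (hkn : k ≤ n) {β : ℕ → ℕ → ℝ}
    (hind : LinearIndependent ℝ
      (fun v : {v : MIdx n // ((v.1.1 : ℕ) = 0 ∧ (v.1.2 : ℕ) ≤ k - 1) ∨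
          ((v.1.2 : ℕ) = 0 ∧ (v.1.1 : ℕ) ≤ k - 1)} =>
        (fun r : MIdx n => momentMat n β r v.1))) :
    2 * k - 1 ≤ (momentMat n β).rank := by
  let e : Fin k ⊕ Fin (k - 1) → {v : MIdx n // ((v.1.1 : ℕ) = 0 ∧ (v.1.2 : ℕ) ≤ k - 1) ∨
      ((v.1.2 : ℕ) = 0 ∧ (v.1.1 : ℕ) ≤ k - 1)} := fun i =>
    ⟨axisMonomial hkn i, by rcases i with i | i <;> simp only [axisMonomial] <;> grind⟩
  have he : Function.Injective e := fun i j h => axisMonomial_injective hkn (congrArg Subtype.val h)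
  have h := (momentMat n β).card_le_rank_of_linearIndependent_col _ (hind.comp e he)
  rwa [Fintype.card_sum, Fintype.card_fin, Fintype.card_fin, ← Nat.add_sub_assoc hk,
    ← two_mul] at h

open Polynomial in
theorem mem_varietyOf_momentMat {n k : ℕ} (hk : 1 ≤ k) (hkn : k ≤ n) (hn : 2 ≤ n)
    {β : ℕ → ℕ → ℝ} {p q : ℝ[X]} (hp : p.natDegree ≤ k - 1) (hq : q.natDegree ≤ k - 1)
    (hyx : (momentMat n β).mulVec
      (coeffVec n (MvPolynomial.X 1 * MvPolynomial.X 0 - 1)) = 0)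
    (hrel : (momentMat n β).mulVec
      (coeffVec n (MvPolynomial.X 0 ^ k
        - aeval (MvPolynomial.X 0) p
        - aeval (MvPolynomial.X 1) q)) = 0)
    {w : ℝ × ℝ} (hw : w ∈ varietyOf n (momentMat n β)) :
    w.2 * w.1 = 1 ∧ (hyperbolaResolvent k p q).IsRoot w.1 := by
  have hyx_deg : (MvPolynomial.X 1 * MvPolynomial.X 0 - 1 :
      MvPolynomial (Fin 2) ℝ).totalDegree ≤ n := by
    refine (MvPolynomial.totalDegree_sub _ _).trans (max_le ?_ (by simp))
    refine (MvPolynomial.totalDegree_mul _ _).trans ?_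
    simp only [MvPolynomial.totalDegree_X]
    omega
  have hrel_deg : (MvPolynomial.X 0 ^ k - aeval (MvPolynomial.X 0) p -
      aeval (MvPolynomial.X 1) q : MvPolynomial (Fin 2) ℝ).totalDegree ≤ n := by
    refine (MvPolynomial.totalDegree_sub _ _).trans
      (max_le ((MvPolynomial.totalDegree_sub _ _).trans (max_le ?_ ?_)) ?_)
    · exact (MvPolynomial.totalDegree_X_pow _ _).le.trans hkn
    · exact (MvPolynomial.totalDegree_aeval_X_le 0 p).trans (by omega)
    · exact (MvPolynomial.totalDegree_aeval_X_le 1 q).trans (by omega)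
  have h1 := hw _ hyx_deg hyx
  have h2 := hw _ hrel_deg hrel
  simp only [map_sub, map_mul, map_pow, map_one, MvPolynomial.eval_X,
    MvPolynomial.eval_aeval_X, Matrix.cons_val_zero, Matrix.cons_val_one] at h1 h2
  have hyx1 : w.2 * w.1 = 1 := by linarith
  refine ⟨hyx1, isRoot_hyperbolaResolvent hk hq (right_ne_zero_of_mul_eq_one hyx1) ?_⟩
  rw [← eq_inv_of_mul_eq_one_left hyx1]
  linarith

theorem flat_of_first_relation_at_xk_general (n k : ℕ) (hk2 : 2 ≤ k) (hkn : k ≤ n)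
    (β : ℕ → ℕ → ℝ)
    (hyx : (momentMat n β).mulVec
      (coeffVec n (MvPolynomial.X 1 * MvPolynomial.X 0 - 1)) = 0)
    (hind : LinearIndependent ℝ
      (fun v : {v : MIdx n // ((v.1.1 : ℕ) = 0 ∧ (v.1.2 : ℕ) ≤ k - 1) ∨
          ((v.1.2 : ℕ) = 0 ∧ (v.1.1 : ℕ) ≤ k - 1)} =>
        (fun r : MIdx n => momentMat n β r v.1)))
    (p q : Polynomial ℝ) (hp : p.natDegree ≤ k - 1) (hq : q.natDegree ≤ k - 1)
    (hrel : (momentMat n β).mulVec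
      (coeffVec n (MvPolynomial.X 0 ^ k
        - Polynomial.aeval (MvPolynomial.X 0) p
        - Polynomial.aeval (MvPolynomial.X 1) q)) = 0)
    (hvar : ((momentMat n β).rank : Cardinal) ≤
      Cardinal.mk (varietyOf n (momentMat n β))) :
    (momentMat n β).rank = 2 * k - 1 := by
  have hk : 1 ≤ k := by omega
  have hdeg := Polynomial.natDegree_hyperbolaResolvent hk hp hq
  have hV : Cardinal.mk (varietyOf n (momentMat n β)) ≤ (2 * k - 1 : ℕ) :=
    hdeg ▸ Polynomial.mk_le_natDegree_of_subset_hyperbola_roots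
      (Polynomial.ne_zero_of_natDegree_gt (n := 0) (by omega))
      fun w hw => mem_varietyOf_momentMat hk hkn (by omega) hp hq hyx hrel hw
  exact le_antisymm (by exact_mod_cast hvar.trans hV)
    (two_mul_sub_one_le_rank_momentMat hk hkn hind)

/-- Case I of the nondegenerate hyperbolic truncated moment problem: if `M(n)` is
positive semidefinite, recursively generated, satisfies `YX = 1`, the columns
`{1, X, Y, …, X^{k−1}, Y^{k−1}}` are linearly independent, there is a column
relation `X^k = p_{k−1}(X) + q_{k−1}(Y)` with `deg p_{k−1}, deg q_{k−1} ≤ k−1`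
(2 ≤ k ≤ n), and `rank M(n) ≤ card V(M(n))`, then `M(n)` is flat:
`rank M(n) = 2k − 1`. -/
theorem flat_of_first_relation_at_xk (n k : ℕ) (hk2 : 2 ≤ k) (hkn : k ≤ n)
    (β : ℕ → ℕ → ℝ)
    (hpsd : (momentMat n β).PosSemidef)
    (hrg : RecursivelyGenerated n (momentMat n β))
    (hyx : (momentMat n β).mulVec
      (coeffVec n (MvPolynomial.X 1 * MvPolynomial.X 0 - 1)) = 0)
    (hind : LinearIndependent ℝ
      (fun v : {v : MIdx n // ((v.1.1 : ℕ) = 0 ∧ (v.1.2 : ℕ) ≤ k - 1) ∨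
          ((v.1.2 : ℕ) = 0 ∧ (v.1.1 : ℕ) ≤ k - 1)} =>
        (fun r : MIdx n => momentMat n β r v.1)))
    (p q : Polynomial ℝ) (hp : p.natDegree ≤ k - 1) (hq : q.natDegree ≤ k - 1)
    (hrel : (momentMat n β).mulVec
      (coeffVec n (MvPolynomial.X 0 ^ k
        - Polynomial.aeval (MvPolynomial.X 0) p
        - Polynomial.aeval (MvPolynomial.X 1) q)) = 0)
    (hvar : ((momentMat n β).rank : Cardinal) ≤
      Cardinal.mk (varietyOf n (momentMat n β))) :
    (momentMat n β).rank = 2 * k - 1 :=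
  flat_of_first_relation_at_xk_general n k hk2 hkn β hyx hind p q hp hq hrel hvar
end
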